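/- arXiv:1209.5223 — 4 statements merged into one kernel-verified Lean document; each statement's English description precedes it below -/
import Mathlib

section
/- Let Ω ⊂ ℝ^d (d = 2 or 3) be a bounded polygonal/polyhedral domain. Suppose: (i) there is a constant κ > 0 with κ‖η‖²_{0,Ω} ≤ ‖η·n‖²_{0,∂Ω} for all rigid motions η; (ii) the second Korn inequality holds on the orthogonal complement of rigid motions: |w|²_{1,Ω} ≤ C_K ‖ε(w)‖²_{0,Ω} whenever w ∈ H¹(Ω)^d is L²-orthogonal to RM(Ω); (iii) a trace inequality ‖w·n‖²_{0,∂Ω} ≤ C_T |w|²_{1,Ω} holds on the orthogonal complement of rigid motions; (iv) |r|²_{1,Ω} ≤ C_P ‖r‖²_{0,Ω} for r ∈ RM(Ω). Then there exists C_{Kn} > 0 such that |v|²_{1,Ω} ≤ C_{Kn} ‖ε(v)‖²_{0,Ω} for all v ∈ H¹(Ω)^d satisfying v·n = 0 on ∂Ω. -/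
open RealInnerProductSpace

/-!
Split `v = w + r` with `r` the orthogonal projection of `v` onto the rigid motions. Since
`ε` kills `r`, `‖ε(w)‖ = ‖ε(v)‖`, and the second Korn inequality bounds `|w|₁`. The boundary
condition `v·n = 0` transfers the normal trace of `w` to `r`, so the trace inequality together
with the lower bound `κ‖η‖² ≤ ‖η·n‖²` on rigid motions controls `‖r‖`, hence `|r|₁`.
-/

theorem Seminorm.map_sub_eq_of_map_eq_zero {𝕜 V : Type*} [SeminormedRing 𝕜] [AddGroup V]
    [SMul 𝕜 V] (p : Seminorm 𝕜 V) {r : V} (hr : p r = 0) (v : V) : p (v - r) = p v :=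
  le_antisymm (by simpa [hr] using map_sub_le_add p v r)
    (by simpa [hr] using map_add_le_add p (v - r) r)

theorem Seminorm.sq_map_add_le {𝕜 V : Type*} [SeminormedRing 𝕜] [AddGroup V] [SMul 𝕜 V]
    (p : Seminorm 𝕜 V) (x y : V) : p (x + y) ^ 2 ≤ 2 * (p x ^ 2 + p y ^ 2) :=
  (pow_le_pow_left₀ (apply_nonneg p _) (map_add_le_add p x y) 2).trans add_sq_le

theorem norm_sq_le_of_map_add_eq_zero {H Y : Type*} [NormedAddCommGroup H]
    [InnerProductSpace ℝ H] [NormedAddCommGroup Y] [NormedSpace ℝ Y]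
    (RM : Submodule ℝ H) (s1 E : Seminorm ℝ H) (T : H →ₗ[ℝ] Y)
    {κ CK CT : ℝ} (hκ : 0 < κ) (hCT : 0 ≤ CT)
    (hbdry : ∀ η ∈ RM, κ * ‖η‖ ^ 2 ≤ ‖T η‖ ^ 2)
    (hkorn2 : ∀ w : H, (∀ η ∈ RM, ⟪w, η⟫ = 0) → s1 w ^ 2 ≤ CK * E w ^ 2)
    (htrace : ∀ w : H, (∀ η ∈ RM, ⟪w, η⟫ = 0) → ‖T w‖ ^ 2 ≤ CT * s1 w ^ 2)
    {w r : H} (hw : ∀ η ∈ RM, ⟪w, η⟫ = 0) (hr : r ∈ RM) (hT : T (w + r) = 0) :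
    ‖r‖ ^ 2 ≤ CT * CK / κ * E w ^ 2 := by
  have hTr : ‖T r‖ = ‖T w‖ := by
    rw [map_add, add_eq_zero_iff_neg_eq'] at hT
    rw [← hT, norm_neg]
  rw [div_mul_eq_mul_div, le_div_iff₀ hκ, mul_comm]
  calc κ * ‖r‖ ^ 2 ≤ ‖T w‖ ^ 2 := hTr ▸ hbdry r hr
    _ ≤ CT * s1 w ^ 2 := htrace w hw
    _ ≤ CT * (CK * E w ^ 2) := mul_le_mul_of_nonneg_left (hkorn2 w hw) hCT
    _ = CT * CK * E w ^ 2 := by ring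

/-- Korn inequality on `H¹_{0,n}(Ω)`: from (i) the rigid-motion boundary bound,
(ii) the second Korn inequality on the orthogonal complement of rigid motions,
(iii) a trace inequality there, and (iv) the finite-dimensional bound on rigid
motions, one obtains `|v|²_{1,Ω} ≤ C_{Kn} ‖ε(v)‖²_{0,Ω}` for all `v` with
`v·n = 0` on `∂Ω`.  Here `H` is `H¹(Ω)^d` with the `L²` inner product, `s1` is
the `H¹` seminorm, `E v = ‖ε(v)‖`, and `T` is the normal trace `v ↦ v·n|_{∂Ω}`. -/
theorem stmt_3 {H Y : Type*} [NormedAddCommGroup H] [InnerProductSpace ℝ H]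
    [NormedAddCommGroup Y] [NormedSpace ℝ Y]
    (RM : Submodule ℝ H) [FiniteDimensional ℝ RM]
    (s1 E : Seminorm ℝ H) (T : H →ₗ[ℝ] Y)
    (κ CK CT CP : ℝ) (hκ : 0 < κ) (hCK : 0 < CK) (hCT : 0 < CT) (hCP : 0 < CP)
    (hE0 : ∀ r ∈ RM, E r = 0)
    (hbdry : ∀ η ∈ RM, κ * ‖η‖ ^ 2 ≤ ‖T η‖ ^ 2)
    (hkorn2 : ∀ w : H, (∀ η ∈ RM, ⟪w, η⟫ = 0) → (s1 w) ^ 2 ≤ CK * (E w) ^ 2)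
    (htrace : ∀ w : H, (∀ η ∈ RM, ⟪w, η⟫ = 0) → ‖T w‖ ^ 2 ≤ CT * (s1 w) ^ 2)
    (hfd : ∀ r ∈ RM, (s1 r) ^ 2 ≤ CP * ‖r‖ ^ 2) :
    ∃ CKn > 0, ∀ v : H, T v = 0 → (s1 v) ^ 2 ≤ CKn * (E v) ^ 2 := by
  refine ⟨2 * (CK + CP * (CT * CK / κ)), by positivity, fun v hv => ?_⟩
  set r : H := RM.starProjection v
  have hr : r ∈ RM := RM.starProjection_apply_mem v
  have hw : ∀ η ∈ RM, ⟪v - r, η⟫ = 0 := RM.starProjection_inner_eq_zero v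
  have hEw : E (v - r) = E v := E.map_sub_eq_of_map_eq_zero (hE0 r hr) v
  have hrv : ‖r‖ ^ 2 ≤ CT * CK / κ * E v ^ 2 := by
    simpa only [hEw] using
      norm_sq_le_of_map_add_eq_zero RM s1 E T hκ hCT.le hbdry hkorn2 htrace hw hr
        (by rwa [sub_add_cancel])
  calc s1 v ^ 2 = s1 (v - r + r) ^ 2 := by rw [sub_add_cancel]
    _ ≤ 2 * (s1 (v - r) ^ 2 + s1 r ^ 2) := s1.sq_map_add_le (v - r) r
    _ ≤ 2 * (CK * E v ^ 2 + CP * (CT * CK / κ * E v ^ 2)) := by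
      gcongr
      · exact hEw ▸ hkorn2 _ hw
      · exact (hfd r hr).trans (mul_le_mul_of_nonneg_left hrv hCP.le)
    _ = 2 * (CK + CP * (CT * CK / κ)) * E v ^ 2 := by ring
end

section
/- (Fictitious Space Lemma) Let Ṽ and V be finite-dimensional real inner product spaces, Π : Ṽ → V a surjective linear map, and B̃ : Ṽ' → Ṽ a symmetric positive definite operator. Then B := Π B̃ Π' : V' → V is symmetric positive definite, where Π' : V' → Ṽ' is the adjoint defined by ⟨Π'g, ṽ⟩ = ⟨g, Π ṽ⟩. Moreover, for every v ∈ V, ⟨B⁻¹v, v⟩ = inf { ⟨B̃⁻¹ṽ, ṽ⟩ : ṽ ∈ Ṽ, Π ṽ = v }. -/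
/-!
Write `h := π' f` for `f` with `π B̃ π' f = v`, so `ṽ* := B̃ h` is a preimage of `v` and
`⟨f, v⟩ = ⟨h, B̃ h⟩`. Any other preimage is `B̃ g` with `π B̃ (g - h) = 0`, hence
`⟨h, B̃ (g - h)⟩ = ⟨f, π B̃ (g - h)⟩ = 0`, and expanding the energy around `h` gives
`⟨g, B̃ g⟩ = ⟨h, B̃ h⟩ + ⟨g - h, B̃ (g - h)⟩ ≥ ⟨h, B̃ h⟩`.
-/

open Module

section FictitiousSpace

variable {R M N : Type*} [CommRing R] [AddCommGroup M] [Module R M] [AddCommGroup N] [Module R N]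
  {B : Dual R M →ₗ[R] M}

theorem apply_apply_eq_add_of_symm (hB : ∀ f g : Dual R M, g (B f) = f (B g)) (g h : Dual R M) :
    g (B g) = h (B h) + 2 * h (B (g - h)) + (g - h) (B (g - h)) := by
  have hsym := hB h (g - h)
  simp only [map_sub, LinearMap.sub_apply] at hsym ⊢
  linear_combination hsym

theorem dualMap_apply_sub_eq_zero (π : M →ₗ[R] N) (f : Dual R N) {g : Dual R M}
    (hg : π (B g) = π (B (π.dualMap f))) :
    π.dualMap f (B (g - π.dualMap f)) = 0 := by
  simp [hg]

theorem pos_comp_dualMap [PartialOrder R] {π : M →ₗ[R] N} (hπ : Function.Surjective π)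
    (hB : ∀ f : Dual R M, f ≠ 0 → 0 < f (B f)) (f : Dual R N) (hf : f ≠ 0) :
    0 < f ((π ∘ₗ B ∘ₗ π.dualMap) f) :=
  hB (π.dualMap f) fun h0 ↦ hf (LinearMap.dualMap_injective_of_surjective hπ (by simpa using h0))

variable [PartialOrder R] [IsOrderedRing R]

theorem apply_dualMap_le_of_map_eq (hBsym : ∀ f g : Dual R M, g (B f) = f (B g))
    (hBnonneg : ∀ f : Dual R M, 0 ≤ f (B f)) (π : M →ₗ[R] N) (f : Dual R N) {g : Dual R M}
    (hg : π (B g) = π (B (π.dualMap f))) :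
    π.dualMap f (B (π.dualMap f)) ≤ g (B g) := by
  rw [apply_apply_eq_add_of_symm hBsym g (π.dualMap f), dualMap_apply_sub_eq_zero π f hg]
  simpa using hBnonneg (g - π.dualMap f)

theorem isGLB_energy_preimage (hBsym : ∀ f g : Dual R M, g (B f) = f (B g))
    (hBnonneg : ∀ f : Dual R M, 0 ≤ f (B f)) (π : M →ₗ[R] N) (f : Dual R N) :
    IsGLB {t : R | ∃ x : M, π x = (π ∘ₗ B ∘ₗ π.dualMap) f ∧ ∃ g : Dual R M, B g = x ∧ t = g x}
      (f ((π ∘ₗ B ∘ₗ π.dualMap) f)) := by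
  constructor
  · rintro t ⟨x, hx, g, rfl, rfl⟩
    exact apply_dualMap_le_of_map_eq hBsym hBnonneg π f hx
  · exact fun t ht ↦ ht ⟨_, rfl, π.dualMap f, rfl, rfl⟩

end FictitiousSpace

theorem stmt_7_general {Vt V : Type*}
    [AddCommGroup Vt] [Module ℝ Vt]
    [AddCommGroup V] [Module ℝ V]
    (π : Vt →ₗ[ℝ] V) (hπ : Function.Surjective π)
    (Bt : Module.Dual ℝ Vt →ₗ[ℝ] Vt)
    (hBtsym : ∀ f g : Module.Dual ℝ Vt, g (Bt f) = f (Bt g))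
    (hBtpd : ∀ f : Module.Dual ℝ Vt, f ≠ 0 → 0 < f (Bt f)) :
    (∀ f g : Module.Dual ℝ V,
      g ((π ∘ₗ Bt ∘ₗ π.dualMap) f) = f ((π ∘ₗ Bt ∘ₗ π.dualMap) g)) ∧
    (∀ f : Module.Dual ℝ V, f ≠ 0 → 0 < f ((π ∘ₗ Bt ∘ₗ π.dualMap) f)) ∧
    (∀ (v : V) (f : Module.Dual ℝ V), (π ∘ₗ Bt ∘ₗ π.dualMap) f = v →
      IsGLB {t : ℝ | ∃ vt : Vt, π vt = v ∧ ∃ g : Module.Dual ℝ Vt,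
        Bt g = vt ∧ t = g vt} (f v)) := by
  have hBtnonneg (f : Module.Dual ℝ Vt) : 0 ≤ f (Bt f) := by
    rcases eq_or_ne f 0 with rfl | hf
    · simp
    · exact (hBtpd f hf).le
  refine ⟨fun f g ↦ hBtsym (π.dualMap f) (π.dualMap g), pos_comp_dualMap hπ hBtpd, ?_⟩
  rintro v f rfl
  exact isGLB_energy_preimage hBtsym hBtnonneg π f

/-- Fictitious Space Lemma: for a surjective `π : Ṽ → V` and an SPD
`B̃ : Ṽ' → Ṽ`, the operator `B = π B̃ π'` is SPD, and
`⟨B⁻¹ v, v⟩ = inf { ⟨B̃⁻¹ ṽ, ṽ⟩ : π ṽ = v }`. -/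
theorem stmt_7 {Vt V : Type*}
    [AddCommGroup Vt] [Module ℝ Vt] [FiniteDimensional ℝ Vt]
    [AddCommGroup V] [Module ℝ V] [FiniteDimensional ℝ V]
    (π : Vt →ₗ[ℝ] V) (hπ : Function.Surjective π)
    (Bt : Module.Dual ℝ Vt →ₗ[ℝ] Vt)
    (hBtsym : ∀ f g : Module.Dual ℝ Vt, g (Bt f) = f (Bt g))
    (hBtpd : ∀ f : Module.Dual ℝ Vt, f ≠ 0 → 0 < f (Bt f)) :
    (∀ f g : Module.Dual ℝ V,
      g ((π ∘ₗ Bt ∘ₗ π.dualMap) f) = f ((π ∘ₗ Bt ∘ₗ π.dualMap) g)) ∧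
    (∀ f : Module.Dual ℝ V, f ≠ 0 → 0 < f ((π ∘ₗ Bt ∘ₗ π.dualMap) f)) ∧
    (∀ (v : V) (f : Module.Dual ℝ V), (π ∘ₗ Bt ∘ₗ π.dualMap) f = v →
      IsGLB {t : ℝ | ∃ vt : Vt, π vt = v ∧ ∃ g : Module.Dual ℝ Vt,
        Bt g = vt ∧ t = g vt} (f v)) :=
  stmt_7_general π hπ Bt hBtsym hBtpd
end

section
/- In the setting of the fictitious space lemma, the minimizer of ⟨B̃⁻¹ṽ, ṽ⟩ over { ṽ : Π ṽ = v } is ṽ* = B̃ Π' B⁻¹ v, and the correction is orthogonal: for every w̃ with Π w̃ = 0, ⟨B̃⁻¹ ṽ*, w̃⟩ = 0. -/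
/-!
Write `f̃ = π' f`, so `f̃ (B̃ f̃) = f (π B̃ π' f) = f v`. If `B̃ g = ṽ` with `π ṽ = v`, then
`h = g - f̃` satisfies `f̃ (B̃ h) = f (π ṽ) - f v = 0`, and by symmetry the energy of `g = f̃ + h`
splits as `f̃ (B̃ f̃) + h (B̃ h) ≥ f̃ (B̃ f̃)`. Orthogonality to `ker π` holds because `π' f`
factors through `π`.
-/

section Energy

variable {R M : Type*} [CommRing R] [PartialOrder R] [IsOrderedRing R]
  [AddCommGroup M] [Module R M] {B : Module.Dual R M →ₗ[R] M}

theorem apply_self_le_apply_add_of_apply_eq_zero (hsym : ∀ f g : Module.Dual R M, g (B f) = f (B g))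
    (hnonneg : ∀ f : Module.Dual R M, 0 ≤ f (B f)) {a b : Module.Dual R M} (hab : a (B b) = 0) :
    a (B a) ≤ (a + b) (B (a + b)) := by
  have hba : b (B a) = 0 := (hsym a b).trans hab
  have hexpand : (a + b) (B (a + b)) = a (B a) + b (B b) := by
    simp only [map_add, LinearMap.add_apply, hab, hba]
    ring
  rw [hexpand]
  exact le_add_of_nonneg_right (hnonneg b)

end Energy

/-- `f` stands for `B⁻¹ v` and `g` for `B̃⁻¹ ṽ`, so that `π.dualMap f = B̃⁻¹ ṽ*`. -/
theorem stmt_8_general {Vt V : Type*}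
    [AddCommGroup Vt] [Module ℝ Vt]
    [AddCommGroup V] [Module ℝ V]
    (π : Vt →ₗ[ℝ] V)
    (Bt : Module.Dual ℝ Vt →ₗ[ℝ] Vt)
    (hBtsym : ∀ f g : Module.Dual ℝ Vt, g (Bt f) = f (Bt g))
    (hBtpd : ∀ f : Module.Dual ℝ Vt, f ≠ 0 → 0 < f (Bt f))
    (v : V) (f : Module.Dual ℝ V) (hf : (π ∘ₗ Bt ∘ₗ π.dualMap) f = v) :
    π (Bt (π.dualMap f)) = v ∧
    (∀ (vt : Vt) (g : Module.Dual ℝ Vt), π vt = v → Bt g = vt →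
      (π.dualMap f) (Bt (π.dualMap f)) ≤ g vt) ∧
    (∀ wt : Vt, π wt = 0 → (π.dualMap f) wt = 0) := by
  have hnonneg : ∀ h : Module.Dual ℝ Vt, 0 ≤ h (Bt h) := fun h =>
    (eq_or_ne h 0).elim (fun h0 => by simp [h0]) (fun h0 => (hBtpd h h0).le)
  refine ⟨hf, fun vt g hvt hg => ?_, fun wt hwt => by simp [hwt]⟩
  have horth : π.dualMap f (Bt (g - π.dualMap f)) = 0 := by
    rw [LinearMap.comp_apply, LinearMap.comp_apply] at hf
    simp only [map_sub, LinearMap.dualMap_apply, hg, hvt, hf, sub_self]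
  calc π.dualMap f (Bt (π.dualMap f))
      ≤ (π.dualMap f + (g - π.dualMap f)) (Bt (π.dualMap f + (g - π.dualMap f))) :=
        apply_self_le_apply_add_of_apply_eq_zero hBtsym hnonneg horth
    _ = g vt := by rw [add_sub_cancel, hg]

/-- In the fictitious space lemma, the minimizer of `⟨B̃⁻¹ṽ, ṽ⟩` over
`{ṽ : π ṽ = v}` is `ṽ* = B̃ π' B⁻¹ v`, and for every `w̃` with `π w̃ = 0` one
has `⟨B̃⁻¹ ṽ*, w̃⟩ = 0`.  Here `f = B⁻¹ v`, so `B̃⁻¹ ṽ* = π' f`. -/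
theorem stmt_8 {Vt V : Type*}
    [AddCommGroup Vt] [Module ℝ Vt] [FiniteDimensional ℝ Vt]
    [AddCommGroup V] [Module ℝ V] [FiniteDimensional ℝ V]
    (π : Vt →ₗ[ℝ] V) (hπ : Function.Surjective π)
    (Bt : Module.Dual ℝ Vt →ₗ[ℝ] Vt)
    (hBtsym : ∀ f g : Module.Dual ℝ Vt, g (Bt f) = f (Bt g))
    (hBtpd : ∀ f : Module.Dual ℝ Vt, f ≠ 0 → 0 < f (Bt f))
    (v : V) (f : Module.Dual ℝ V) (hf : (π ∘ₗ Bt ∘ₗ π.dualMap) f = v) :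
    π (Bt (π.dualMap f)) = v ∧
    (∀ (vt : Vt) (g : Module.Dual ℝ Vt), π vt = v → Bt g = vt →
      (π.dualMap f) (Bt (π.dualMap f)) ≤ g vt) ∧
    (∀ wt : Vt, π wt = 0 → (π.dualMap f) wt = 0) :=
  stmt_8_general π Bt hBtsym hBtpd v f hf
end

section
/- Suppose a bilinear form a_h on a finite-dimensional space V_h satisfies a_h(v,v) ≥ 2ν‖ε(v)‖² + 2να|[v_t]|²_* − 4νC|v|_{1,h}|[v_t]|_*, and the discrete Korn inequality |v|²_{1,h} ≤ C_K(‖ε(v)‖² + |[v_t]|²_*) holds. Then there exists α₀ > 0 (depending only on C and C_K) such that for all α ≥ α₀ there is γ > 0 with a_h(v,v) ≥ γ (2ν|v|²_{1,h} + 2ν|[v_t]|²_*) for all v ∈ V_h. -/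
/-! Young's inequality `2Cxz ≤ x²/(2C_K) + 2C_K C² z²` lets the penalty `α ≥ 1 + 2C_K C²` absorb
the cross term, leaving `‖ε(v)‖² + |[v_t]|²_* − |v|²_{1,h}/(2C_K)`, which Korn's inequality bounds
below by a multiple of `|v|²_{1,h} + |[v_t]|²_*`. -/

lemma two_mul_mul_le_div_add {K : ℝ} (hK : 0 < K) (C x z : ℝ) :
    2 * C * x * z ≤ x ^ 2 / (2 * K) + 2 * K * C ^ 2 * z ^ 2 := by
  rw [div_add' _ _ _ (by positivity), le_div_iff₀ (by positivity)]
  nlinarith [sq_nonneg (x - 2 * K * C * z)]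

lemma div_le_sub_of_sq_le_mul {K x y z : ℝ} (hK : 0 < K) (hkorn : x ^ 2 ≤ K * (y ^ 2 + z ^ 2)) :
    (x ^ 2 + z ^ 2) / (4 * (K + 1)) ≤ y ^ 2 + z ^ 2 - x ^ 2 / (2 * K) := by
  have hx : x ^ 2 / K ≤ y ^ 2 + z ^ 2 := by rwa [div_le_iff₀' hK]
  have hxK : x ^ 2 / (K + 1) ≤ x ^ 2 / K := by gcongr; linarith
  have hzK : z ^ 2 / (K + 1) ≤ z ^ 2 := div_le_self (sq_nonneg z) (by linarith)
  calc (x ^ 2 + z ^ 2) / (4 * (K + 1)) = (x ^ 2 / (K + 1) + z ^ 2 / (K + 1)) / 4 := by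
        field_simp
    _ ≤ (x ^ 2 / K + z ^ 2) / 4 := by gcongr
    _ ≤ y ^ 2 + z ^ 2 - x ^ 2 / (2 * K) := by
        rw [mul_comm, ← div_div]
        linarith [sq_nonneg y]

lemma div_le_add_mul_sub_of_sq_le_mul {K C α x y z : ℝ} (hK : 0 < K) (hα : 1 + 2 * K * C ^ 2 ≤ α)
    (hkorn : x ^ 2 ≤ K * (y ^ 2 + z ^ 2)) :
    (x ^ 2 + z ^ 2) / (4 * (K + 1)) ≤ y ^ 2 + α * z ^ 2 - 2 * C * x * z := by
  have hpen : (1 + 2 * K * C ^ 2) * z ^ 2 ≤ α * z ^ 2 :=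
    mul_le_mul_of_nonneg_right hα (sq_nonneg z)
  linarith [two_mul_mul_le_div_add hK C x z, div_le_sub_of_sq_le_mul hK hkorn]

theorem stmt_11_general {V : Type*} (x1 E J : V → ℝ)
    (ν C CK : ℝ) (hν : 0 < ν) (hCK : 0 < CK)
    (a : ℝ → V → ℝ)
    (hlow : ∀ (α : ℝ) (v : V),
      a α v ≥ 2 * ν * (E v) ^ 2 + 2 * ν * α * (J v) ^ 2
        - 4 * ν * C * (x1 v) * (J v))
    (hkorn : ∀ v : V, (x1 v) ^ 2 ≤ CK * ((E v) ^ 2 + (J v) ^ 2)) :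
    ∃ α₀ > 0, ∀ α ≥ α₀, ∃ γ > 0, ∀ v : V,
      a α v ≥ γ * (2 * ν * (x1 v) ^ 2 + 2 * ν * (J v) ^ 2) := by
  refine ⟨1 + 2 * CK * C ^ 2, by positivity,
    fun α hα => ⟨1 / (4 * (CK + 1)), by positivity, fun v => ?_⟩⟩
  have key := div_le_add_mul_sub_of_sq_le_mul hCK hα (hkorn v)
  calc 1 / (4 * (CK + 1)) * (2 * ν * (x1 v) ^ 2 + 2 * ν * (J v) ^ 2)
      = 2 * ν * (((x1 v) ^ 2 + (J v) ^ 2) / (4 * (CK + 1))) := by ring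
    _ ≤ 2 * ν * ((E v) ^ 2 + α * (J v) ^ 2 - 2 * C * (x1 v) * (J v)) := by gcongr
    _ = 2 * ν * (E v) ^ 2 + 2 * ν * α * (J v) ^ 2 - 4 * ν * C * (x1 v) * (J v) := by ring
    _ ≤ a α v := hlow α v

/-- Coercivity of `a_h` for large penalty: if
`a_h(v,v) ≥ 2ν‖ε(v)‖² + 2να|[v_t]|²_* − 4νC|v|_{1,h}|[v_t]|_*` and the
discrete Korn inequality `|v|²_{1,h} ≤ C_K(‖ε(v)‖² + |[v_t]|²_*)` holds, then
there is `α₀ > 0` such that for all `α ≥ α₀` there is `γ > 0` with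
`a_h(v,v) ≥ γ ‖v‖²_{DG}` where `‖v‖²_{DG} = 2ν|v|²_{1,h} + 2ν|[v_t]|²_*`. -/
theorem stmt_11 {V : Type*} (x1 E J : V → ℝ)
    (hx1 : ∀ v, 0 ≤ x1 v) (hE : ∀ v, 0 ≤ E v) (hJ : ∀ v, 0 ≤ J v)
    (ν C CK : ℝ) (hν : 0 < ν) (hC : 0 ≤ C) (hCK : 0 < CK)
    (a : ℝ → V → ℝ)
    (hlow : ∀ (α : ℝ) (v : V),
      a α v ≥ 2 * ν * (E v) ^ 2 + 2 * ν * α * (J v) ^ 2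
        - 4 * ν * C * (x1 v) * (J v))
    (hkorn : ∀ v : V, (x1 v) ^ 2 ≤ CK * ((E v) ^ 2 + (J v) ^ 2)) :
    ∃ α₀ > 0, ∀ α ≥ α₀, ∃ γ > 0, ∀ v : V,
      a α v ≥ γ * (2 * ν * (x1 v) ^ 2 + 2 * ν * (J v) ^ 2) :=
  stmt_11_general x1 E J ν C CK hν hCK a hlow hkorn
end
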